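/- Let g ≥ 4, let m = ⌊g/2⌋, and let t = ⌊m/2⌋. Then the group G_2 = π_g / N(ℬ^g_1 ∪ 𝒞) is isomorphic to the genus-t surface group π_t. -/

import Mathlib

namespace Paper

/-- The free group `F_g` on the `2g` generators `a_1, b_1, …, a_g, b_g`
(the pair `(i, false)` is `a_{i+1}`, the pair `(i, true)` is `b_{i+1}`). -/
abbrev F (g : ℕ) := FreeGroup (Fin g × Bool)

/-- The generator `a_i` of `F_g`, for `1 ≤ i ≤ g`; by convention `a_i = 1` for out-of-range
indices (in particular `a_{g+1} = 1`). -/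
def a (g i : ℕ) : F g :=
  if h : 1 ≤ i ∧ i ≤ g then FreeGroup.of (⟨i - 1, by omega⟩, false) else 1

/-- The generator `b_i` of `F_g`, for `1 ≤ i ≤ g`. -/
def b (g i : ℕ) : F g :=
  if h : 1 ≤ i ∧ i ≤ g then FreeGroup.of (⟨i - 1, by omega⟩, true) else 1

/-- The word `c_i = b_i⁻¹ ⋯ b_2⁻¹ b_1⁻¹ (a_1 b_1 a_1⁻¹)(a_2 b_2 a_2⁻¹) ⋯ (a_i b_i a_i⁻¹)`,
with `c_0 = 1`. -/
def c (g i : ℕ) : F g :=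
  (((List.range i).reverse.map fun j => (b g (j + 1))⁻¹).prod) *
    (((List.range i).map fun j => a g (j + 1) * b g (j + 1) * (a g (j + 1))⁻¹).prod)

/-- The product `b_i b_{i+1} ⋯ b_j`. -/
def prodb (g i j : ℕ) : F g := ((List.range (j + 1 - i)).map fun l => b g (i + l)).prod

/-- `B^h_{0,1} = b_1 b_2 ⋯ b_h`. -/
def B01 (g h : ℕ) : F g := prodb g 1 h

/-- `B^h_{0,2} = b_1 b_2 ⋯ b_h · c_h a_{h+1}`. -/
def B02 (g h : ℕ) : F g := prodb g 1 h * c g h * a g (h + 1)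

/-- `B^h_{0,s}` for `s = 1, 2`. -/
def B0 (g s h : ℕ) : F g := if s = 1 then B01 g h else B02 g h

/-- `B^h_{2k-1} = a_k · b_k b_{k+1} ⋯ b_{h+1-k} · c_{h+1-k} a_{h+1-k}`. -/
def Bodd (g h k : ℕ) : F g :=
  a g k * prodb g k (h + 1 - k) * c g (h + 1 - k) * a g (h + 1 - k)

/-- `B^h_{2k} = a_k · b_{k+1} b_{k+2} ⋯ b_{h-k} · c_{h-k} a_{h+1-k}`. -/
def Beven (g h k : ℕ) : F g :=
  a g k * prodb g (k + 1) (h - k) * c g (h - k) * a g (h + 1 - k)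

/-- The set of words `ℬ^h_s`: it consists of `B^h_{0,s}, B^h_1, …, B^h_h` (the odd-indexed
`B^h_{2k-1}` for `2k - 1 ≤ h` and the even-indexed `B^h_{2k}` for `2k ≤ h`), together with
`a_{r+1}` and `c_r a_{r+1}` when `h = 2r + 1` is odd. -/
def Bset (g s h : ℕ) : Set (F g) :=
  {B0 g s h}
    ∪ {w | ∃ k, 1 ≤ k ∧ 2 * k - 1 ≤ h ∧ w = Bodd g h k}
    ∪ {w | ∃ k, 1 ≤ k ∧ 2 * k ≤ h ∧ w = Beven g h k}
    ∪ (if h % 2 = 1 then {a g (h / 2 + 1), c g (h / 2) * a g (h / 2 + 1)} else (∅ : Set (F g)))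

/-- The genus-`g` surface group `π_g`, presented with generators `a_1, b_1, …, a_g, b_g`
and the single relator `c_g`. -/
abbrev pi (g : ℕ) := PresentedGroup ({c g g} : Set (F g))

/-- The natural projection `F_g → π_g`. -/
abbrev toPi (g : ℕ) : F g →* pi g := PresentedGroup.mk _

/-- The quotient of `π_g` by the normal closure of the images of a set `S` of words. -/
abbrev quotBy (g : ℕ) (S : Set (F g)) :=
  pi g ⧸ Subgroup.normalClosure (toPi g '' S)

/-- The projection `π_g → π_g / N(S)`. -/
abbrev projBy (g : ℕ) (S : Set (F g)) : pi g →* quotBy g S :=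
  QuotientGroup.mk' _

/-- The set `𝒞` of words: with `m = ⌊g/2⌋` and `s = 1` for `g` even, `s = 2` for `g` odd,
`𝒞 = ℬ^m_s ∪ {c_t}` if `m = 2t` is even, and `𝒞 = ℬ^m_s` if `m = 2t + 1` is odd. -/
def Cset (g : ℕ) : Set (F g) :=
  Bset g (if g % 2 = 0 then 1 else 2) (g / 2)
    ∪ (if (g / 2) % 2 = 0 then {c g (g / 2 / 2)} else (∅ : Set (F g)))

/-! ### Auxiliary word lemmas -/

section Words

variable {g : ℕ}

/-- The product `(a_i b_i a_i⁻¹) ⋯ (a_j b_j a_j⁻¹)`. -/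
def prodab (g i j : ℕ) : F g :=
  ((List.range (j + 1 - i)).map fun l => a g (i + l) * b g (i + l) * (a g (i + l))⁻¹).prod

lemma seg_succ {M : Type*} [Monoid M] (Fn : ℕ → M) (n : ℕ) :
    ((List.range (n + 1)).map Fn).prod = ((List.range n).map Fn).prod * Fn n := by
  rw [List.range_succ, List.map_append, List.prod_append, List.map_singleton,
    List.prod_singleton]

lemma seg_cons {M : Type*} [Monoid M] (Fn : ℕ → M) (n : ℕ) :
    ((List.range (n + 1)).map Fn).prod = Fn 0 * ((List.range n).map fun l => Fn (l + 1)).prod := by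
  rw [List.range_succ_eq_map, List.map_cons, List.prod_cons, List.map_map]
  rfl

lemma prodb_empty {i j : ℕ} (h : j + 1 ≤ i) : prodb g i j = 1 := by
  unfold prodb
  have : j + 1 - i = 0 := by omega
  rw [this]
  simp

lemma prodab_empty {i j : ℕ} (h : j + 1 ≤ i) : prodab g i j = 1 := by
  unfold prodab
  have : j + 1 - i = 0 := by omega
  rw [this]
  simp

lemma prodb_succ {i j : ℕ} (h : i ≤ j + 1) : prodb g i (j + 1) = prodb g i j * b g (j + 1) := by
  unfold prodb
  have h1 : j + 1 + 1 - i = (j + 1 - i) + 1 := by omega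
  rw [h1, seg_succ]
  have h2 : i + (j + 1 - i) = j + 1 := by omega
  rw [h2]

lemma prodab_succ {i j : ℕ} (h : i ≤ j + 1) :
    prodab g i (j + 1) = prodab g i j * (a g (j + 1) * b g (j + 1) * (a g (j + 1))⁻¹) := by
  unfold prodab
  have h1 : j + 1 + 1 - i = (j + 1 - i) + 1 := by omega
  rw [h1, seg_succ]
  have h2 : i + (j + 1 - i) = j + 1 := by omega
  rw [h2]

lemma prodb_cons {i j : ℕ} (h : i ≤ j) : prodb g i j = b g i * prodb g (i + 1) j := by
  unfold prodb
  have h1 : j + 1 - i = (j - i) + 1 := by omega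
  rw [h1, seg_cons]
  congr 1
  have h2 : j + 1 - (i + 1) = j - i := by omega
  rw [h2]
  congr 1
  apply List.map_congr_left
  intro l _
  congr 1
  omega

lemma prodab_cons {i j : ℕ} (h : i ≤ j) :
    prodab g i j = (a g i * b g i * (a g i)⁻¹) * prodab g (i + 1) j := by
  unfold prodab
  have h1 : j + 1 - i = (j - i) + 1 := by omega
  rw [h1, seg_cons]
  congr 1
  have h2 : j + 1 - (i + 1) = j - i := by omega
  rw [h2]
  congr 1
  apply List.map_congr_left
  intro l _
  have : i + (l + 1) = i + 1 + l := by omega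
  rw [this]

lemma prodb_split {i k j : ℕ} (h1 : i ≤ k + 1) (h2 : k ≤ j) :
    prodb g i j = prodb g i k * prodb g (k + 1) j := by
  obtain ⟨n, rfl⟩ := Nat.exists_eq_add_of_le h2
  induction n with
  | zero => rw [Nat.add_zero, prodb_empty (le_refl (k + 1)), mul_one]
  | succ n ih =>
    have e1 : k + (n + 1) = (k + n) + 1 := by omega
    rw [e1, prodb_succ (by omega), prodb_succ (by omega), ih (by omega), mul_assoc]

lemma prodab_split {i k j : ℕ} (h1 : i ≤ k + 1) (h2 : k ≤ j) :
    prodab g i j = prodab g i k * prodab g (k + 1) j := by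
  obtain ⟨n, rfl⟩ := Nat.exists_eq_add_of_le h2
  induction n with
  | zero => rw [Nat.add_zero, prodab_empty (le_refl (k + 1)), mul_one]
  | succ n ih =>
    have e1 : k + (n + 1) = (k + n) + 1 := by omega
    rw [e1, prodab_succ (by omega), prodab_succ (by omega), ih (by omega), mul_assoc]

lemma rev_inv_prod {G : Type*} [Group G] (l : List G) :
    (l.reverse.map fun x => x⁻¹).prod = l.prod⁻¹ := by
  rw [List.map_reverse, ← List.prod_inv_reverse]

lemma c_eq (i : ℕ) : c g i = (prodb g 1 i)⁻¹ * prodab g 1 i := by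
  unfold c prodb prodab
  congr 1
  · rw [show ((List.range i).reverse.map fun j => (b g (j + 1))⁻¹)
        = (((List.range i).map fun j => b g (j + 1)).reverse.map fun x => x⁻¹) by
      simp only [← List.map_reverse, List.map_map]; rfl]
    rw [rev_inv_prod]
    congr 2
    have : i + 1 - 1 = i := by omega
    rw [this]
    apply List.map_congr_left
    intro l _
    congr 1
    omega
  · congr 1
    have : i + 1 - 1 = i := by omega
    rw [this]
    apply List.map_congr_left
    intro l _
    have : 1 + l = l + 1 := by omega
    rw [this]

lemma c_zero : c g 0 = 1 := by
  rw [c_eq, prodb_empty (by omega), prodab_empty (by omega)]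
  simp

lemma c_succ (j : ℕ) :
    c g (j + 1) = (b g (j + 1))⁻¹ * c g j * (a g (j + 1) * b g (j + 1) * (a g (j + 1))⁻¹) := by
  rw [c_eq, c_eq, prodb_succ (by omega), prodab_succ (by omega)]
  group

end Words

/-! ### Generic homomorphism lemmas -/

section Hom

variable {g : ℕ} {H : Type*} [Group H]

private lemma solve_right {α β : H} (h : α * β = 1) : β = α⁻¹ := by
  rw [← inv_mul_cancel_left α β, h, mul_one]

private lemma solve_mid {α X β : H} (h : α * X * β = 1) : X = α⁻¹ * β⁻¹ := by
  have h2 : X = α⁻¹ * (α * X * β) * β⁻¹ := by group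
  rw [h] at h2
  rw [h2]
  group

lemma f_c_eq (f : F g →* H) (j : ℕ) :
    f (c g j) = (f (prodb g 1 j))⁻¹ * f (prodab g 1 j) := by
  rw [c_eq, map_mul, map_inv]

lemma chainA (f : F g →* H) (h : ℕ)
    (h0 : f (prodb g 1 h) * f (c g h) = 1)
    (hodd : ∀ k, 1 ≤ k → 2 * k - 1 ≤ h → f (Bodd g h k) = 1)
    (heven : ∀ k, 1 ≤ k → 2 * k ≤ h → f (Beven g h k) = 1) :
    ∀ k, 1 ≤ k → 2 * k ≤ h + 1 → f (a g (h + 1 - k)) = (f (a g k))⁻¹ := by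
  intro k
  induction k with
  | zero => omega
  | succ k ih =>
    intro _ hk2
    rcases Nat.eq_zero_or_pos k with hk0 | hk1
    · subst hk0
      have hb := hodd 1 (by omega) (by omega)
      rw [Bodd] at hb
      have e : h + 1 - 1 = h := by omega
      rw [e] at hb
      rw [map_mul, map_mul, map_mul] at hb
      rw [e]
      apply solve_right
      have h2 : f (a g 1) * f (a g h)
          = f (a g 1) * (f (prodb g 1 h) * f (c g h)) * f (a g h) := by
        rw [h0, mul_one]
      rw [h2, ← hb]
      group
    · -- step
      have ihk := ih hk1 (by omega)
      have he := heven k hk1 (by omega)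
      have ho := hodd (k + 1) (by omega) (by omega)
      rw [Beven, map_mul, map_mul, map_mul] at he
      rw [Bodd] at ho
      have e : h + 1 - (k + 1) = h - k := by omega
      rw [e] at ho
      rw [map_mul, map_mul, map_mul] at ho
      rw [e]
      rw [ihk] at he
      -- he : f a k * fW * fγ * (f a k)⁻¹ = 1
      have hW : f (prodb g (k + 1) (h - k)) * f (c g (h - k)) = 1 := by
        have h3 : f (a g k) * (f (prodb g (k + 1) (h - k)) * f (c g (h - k))) * (f (a g k))⁻¹
            = 1 := by rw [← he]; group
        have h4 := solve_mid h3
        rw [h4]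
        group
      apply solve_right
      have h5 : f (a g (k + 1)) * f (a g (h - k))
          = f (a g (k + 1)) * (f (prodb g (k + 1) (h - k)) * f (c g (h - k)))
            * f (a g (h - k)) := by rw [hW, mul_one]
      rw [h5, ← ho]
      group

lemma chainB (f : F g →* H) (h : ℕ)
    (h0 : f (prodb g 1 h) * f (c g h) = 1)
    (hodd : ∀ k, 1 ≤ k → 2 * k - 1 ≤ h → f (Bodd g h k) = 1)
    (heven : ∀ k, 1 ≤ k → 2 * k ≤ h → f (Beven g h k) = 1) :
    ∀ k, 1 ≤ k → 2 * k ≤ h →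
      f (b g (h + 1 - k)) = f (a g k) * (f (b g k))⁻¹ * (f (a g k))⁻¹ := by
  intro k hk1 hk2
  have hA := chainA f h h0 hodd heven k hk1 (by omega)
  have he := heven k hk1 hk2
  have ho := hodd k hk1 (by omega)
  rw [Beven, map_mul, map_mul, map_mul, hA] at he
  have hW : f (prodb g (k + 1) (h - k)) * f (c g (h - k)) = 1 := by
    have h3 : f (a g k) * (f (prodb g (k + 1) (h - k)) * f (c g (h - k))) * (f (a g k))⁻¹
        = 1 := by rw [← he]; group
    have h4 := solve_mid h3
    rw [h4]
    group
  have e : h + 1 - k = (h - k) + 1 := by omega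
  rw [Bodd, e, c_succ, prodb_cons (show k ≤ h - k + 1 by omega),
    prodb_succ (show k + 1 ≤ h - k + 1 by omega)] at ho
  simp only [map_mul, map_inv] at ho
  rw [e] at hA
  rw [hA] at ho
  rw [e]
  -- ho in α β W B' γ
  have key : f (a g k) * f (b g k) * (f (prodb g (k + 1) (h - k)) * f (c g (h - k)))
      * (f (a g k))⁻¹ * f (b g (h - k + 1)) = 1 := by
    rw [← ho]; group
  rw [hW, mul_one] at key
  have h6 : (f (a g k) * f (b g k) * (f (a g k))⁻¹) * f (b g (h - k + 1)) = 1 := by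
    rw [← key]
  have h7 := solve_right h6
  rw [h7]
  group

section Master

variable (f : F g →* H) (h r : ℕ)

lemma revB
    (hA : ∀ k, 1 ≤ k → 2 * k ≤ h + 1 → f (a g (h + 1 - k)) = (f (a g k))⁻¹)
    (hB : ∀ k, 1 ≤ k → 2 * k ≤ h →
      f (b g (h + 1 - k)) = f (a g k) * (f (b g k))⁻¹ * (f (a g k))⁻¹) :
    ∀ j k, 1 ≤ k → 2 * j ≤ h → k ≤ j + 1 →
      f (prodb g (h + 1 - j) (h + 1 - k)) = (f (prodab g k j))⁻¹ := by
  intro j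
  induction j with
  | zero =>
    intro k hk1 _ hk2
    have hk : k = 1 := by omega
    subst hk
    rw [prodb_empty (by omega), prodab_empty (by omega)]
    simp
  | succ j ih =>
    intro k hk1 hj hk2
    rcases Nat.eq_or_lt_of_le hk2 with hke | hklt
    · rw [hke, prodb_empty (by omega), prodab_empty (by omega)]
      simp
    · have hk3 : k ≤ j + 1 := by omega
      have e1 : h + 1 - (j + 1) = h - j := by omega
      rw [e1, prodb_cons (show h - j ≤ h + 1 - k by omega)]
      have e2 : h - j = h + 1 - (j + 1) := by omega
      have e3 : h - j + 1 = h + 1 - j := by omega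
      rw [map_mul, e3, ih k hk1 (by omega) hk3, e2,
        hB (j + 1) (by omega) (by omega),
        prodab_succ (show k ≤ j + 1 from hk3)]
      simp only [map_mul, map_inv]
      group

lemma revA
    (hA : ∀ k, 1 ≤ k → 2 * k ≤ h + 1 → f (a g (h + 1 - k)) = (f (a g k))⁻¹)
    (hB : ∀ k, 1 ≤ k → 2 * k ≤ h →
      f (b g (h + 1 - k)) = f (a g k) * (f (b g k))⁻¹ * (f (a g k))⁻¹) :
    ∀ j k, 1 ≤ k → 2 * j ≤ h → k ≤ j + 1 →
      f (prodab g (h + 1 - j) (h + 1 - k)) = (f (prodb g k j))⁻¹ := by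
  intro j
  induction j with
  | zero =>
    intro k hk1 _ hk2
    have hk : k = 1 := by omega
    subst hk
    rw [prodb_empty (by omega), prodab_empty (by omega)]
    simp
  | succ j ih =>
    intro k hk1 hj hk2
    rcases Nat.eq_or_lt_of_le hk2 with hke | hklt
    · rw [hke, prodb_empty (by omega), prodab_empty (by omega)]
      simp
    · have hk3 : k ≤ j + 1 := by omega
      have e1 : h + 1 - (j + 1) = h - j := by omega
      rw [e1, prodab_cons (show h - j ≤ h + 1 - k by omega)]
      have e2 : h - j = h + 1 - (j + 1) := by omega
      have e3 : h - j + 1 = h + 1 - j := by omega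
      rw [map_mul, e3, ih k hk1 (by omega) hk3, e2]
      rw [prodb_succ (show k ≤ j + 1 from hk3)]
      simp only [map_mul, map_inv]
      rw [hB (j + 1) (by omega) (by omega), hA (j + 1) (by omega) (by omega)]
      group

variable (hhr : h = 2 * r ∨ h = 2 * r + 1)
variable (hA : ∀ k, 1 ≤ k → 2 * k ≤ h + 1 → f (a g (h + 1 - k)) = (f (a g k))⁻¹)
variable (hB : ∀ k, 1 ≤ k → 2 * k ≤ h →
      f (b g (h + 1 - k)) = f (a g k) * (f (b g k))⁻¹ * (f (a g k))⁻¹)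

include hhr hA hB

lemma raw_odd (hodd : h = 2 * r + 1) :
    f (prodb g 1 h) = f (prodb g 1 r) * f (b g (r + 1)) * (f (prodab g 1 r))⁻¹ := by
  have hs : prodb g 1 h = prodb g 1 r * prodb g (r + 1) h := by
    apply prodb_split (by omega) (by omega)
  have hc : prodb g (r + 1) h = b g (r + 1) * prodb g (r + 2) h := by
    apply prodb_cons (by omega)
  have hrev := revB f h hA hB r 1 (by omega) (by omega) (by omega)
  rw [show h + 1 - 1 = h by omega, show h + 1 - r = r + 2 by omega] at hrev
  rw [hs, hc, map_mul, map_mul, hrev, mul_assoc]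

variable (hma : h = 2 * r + 1 → f (a g (r + 1)) = 1)
variable (hmb : h = 2 * r + 1 → f (b g (r + 1)) = 1)

include hma hmb

lemma fseg_prodb : ∀ ι κ, 1 ≤ ι → ι ≤ κ → κ ≤ r + 1 →
    f (prodb g ι (h + 1 - κ)) = f (prodb g ι r) * (f (prodab g κ r))⁻¹ := by
  intro ι κ h1 h2 h3
  have hrev := revB f h hA hB r κ (by omega) (by omega) (by omega)
  rcases hhr with he | ho
  · have hs : prodb g ι (h + 1 - κ) = prodb g ι r * prodb g (r + 1) (h + 1 - κ) := by
      apply prodb_split (by omega) (by omega)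
    rw [show h + 1 - r = r + 1 by omega] at hrev
    rw [hs, map_mul, hrev]
  · have hs : prodb g ι (h + 1 - κ) = prodb g ι r * prodb g (r + 1) (h + 1 - κ) := by
      apply prodb_split (by omega) (by omega)
    have hc : prodb g (r + 1) (h + 1 - κ) = b g (r + 1) * prodb g (r + 2) (h + 1 - κ) := by
      apply prodb_cons (by omega)
    rw [show h + 1 - r = r + 2 by omega] at hrev
    rw [hs, hc, map_mul, map_mul, hmb ho, one_mul, hrev]

lemma fseg_prodab : ∀ ι κ, 1 ≤ ι → ι ≤ κ → κ ≤ r + 1 →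
    f (prodab g ι (h + 1 - κ)) = f (prodab g ι r) * (f (prodb g κ r))⁻¹ := by
  intro ι κ h1 h2 h3
  have hrev := revA f h hA hB r κ (by omega) (by omega) (by omega)
  rcases hhr with he | ho
  · have hs : prodab g ι (h + 1 - κ) = prodab g ι r * prodab g (r + 1) (h + 1 - κ) := by
      apply prodab_split (by omega) (by omega)
    rw [show h + 1 - r = r + 1 by omega] at hrev
    rw [hs, map_mul, hrev]
  · have hs : prodab g ι (h + 1 - κ) = prodab g ι r * prodab g (r + 1) (h + 1 - κ) := by
      apply prodab_split (by omega) (by omega)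
    have hc : prodab g (r + 1) (h + 1 - κ)
        = (a g (r + 1) * b g (r + 1) * (a g (r + 1))⁻¹) * prodab g (r + 2) (h + 1 - κ) := by
      apply prodab_cons (by omega)
    rw [show h + 1 - r = r + 2 by omega] at hrev
    rw [hs, hc, map_mul, map_mul, hrev]
    simp only [map_mul, map_inv]
    rw [hma ho, hmb ho]
    group

lemma fc_dec : ∀ κ, 1 ≤ κ → κ ≤ r + 1 →
    f (c g (h + 1 - κ)) = f (prodab g κ r) * f (c g r) * (f (prodb g κ r))⁻¹ := by
  intro κ h1 h2
  have hD : f (prodab g 1 r) = f (prodb g 1 r) * f (c g r) := by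
    rw [f_c_eq]
    group
  rw [f_c_eq, fseg_prodb f h r hhr hA hB hma hmb 1 κ (by omega) h1 h2,
    fseg_prodab f h r hhr hA hB hma hmb 1 κ (by omega) h1 h2, hD]
  group

lemma master_c : f (c g h) = (f (prodb g 1 r) * f (c g r) * (f (prodb g 1 r))⁻¹) ^ 2 := by
  have hD : f (prodab g 1 r) = f (prodb g 1 r) * f (c g r) := by
    rw [f_c_eq]
    group
  have h1 := fseg_prodb f h r hhr hA hB hma hmb 1 1 (by omega) (by omega) (by omega)
  have h2 := fseg_prodab f h r hhr hA hB hma hmb 1 1 (by omega) (by omega) (by omega)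
  rw [show h + 1 - 1 = h by omega] at h1 h2
  rw [f_c_eq, h1, h2, hD, sq]
  group

lemma master_prodb :
    f (prodb g 1 h) = f (prodb g 1 r) * (f (c g r))⁻¹ * (f (prodb g 1 r))⁻¹ := by
  have hD : f (prodab g 1 r) = f (prodb g 1 r) * f (c g r) := by
    rw [f_c_eq]
    group
  have h1 := fseg_prodb f h r hhr hA hB hma hmb 1 1 (by omega) (by omega) (by omega)
  rw [show h + 1 - 1 = h by omega] at h1
  rw [h1, hD]
  group

lemma master_bodd : ∀ k, 1 ≤ k → 2 * k ≤ h + 1 →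
    f (Bodd g h k) = f (a g k) * (f (prodb g k r) * f (c g r) * (f (prodb g k r))⁻¹)
      * (f (a g k))⁻¹ := by
  intro k h1 h2
  rw [Bodd, map_mul, map_mul, map_mul,
    fseg_prodb f h r hhr hA hB hma hmb k k h1 (le_refl k) (by omega),
    fc_dec f h r hhr hA hB hma hmb k h1 (by omega),
    hA k h1 h2]
  group

lemma master_beven : ∀ k, 1 ≤ k → 2 * k ≤ h →
    f (Beven g h k) = f (a g k)
      * (f (prodb g (k + 1) r) * f (c g r) * (f (prodb g (k + 1) r))⁻¹)
      * (f (a g k))⁻¹ := by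
  intro k h1 h2
  have e1 : h - k = h + 1 - (k + 1) := by omega
  rw [Beven, map_mul, map_mul, map_mul, e1,
    fseg_prodb f h r hhr hA hB hma hmb (k + 1) (k + 1) (by omega) (le_refl _) (by omega),
    fc_dec f h r hhr hA hB hma hmb (k + 1) (by omega) (by omega),
    hA k h1 (by omega)]
  group

end Master

end Hom

/-! ### The folding maps -/

section Maps

lemma a_of {g i : ℕ} (h1 : 1 ≤ i) (h2 : i ≤ g) :
    a g i = FreeGroup.of ((⟨i - 1, by omega⟩ : Fin g), false) := by
  rw [a, dif_pos ⟨h1, h2⟩]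

lemma b_of {g i : ℕ} (h1 : 1 ≤ i) (h2 : i ≤ g) :
    b g i = FreeGroup.of ((⟨i - 1, by omega⟩ : Fin g), true) := by
  rw [b, dif_pos ⟨h1, h2⟩]

lemma a_one {g i : ℕ} (h : ¬(1 ≤ i ∧ i ≤ g)) : a g i = 1 := by rw [a, dif_neg h]

lemma b_one {g i : ℕ} (h : ¬(1 ≤ i ∧ i ≤ g)) : b g i = 1 := by rw [b, dif_neg h]

lemma of_a {g i0 : ℕ} (hi0 : i0 < g) :
    (FreeGroup.of ((⟨i0, hi0⟩ : Fin g), false) : F g) = a g (i0 + 1) := by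
  rw [a_of (by omega) (by omega)]
  congr 1

lemma of_b {g i0 : ℕ} (hi0 : i0 < g) :
    (FreeGroup.of ((⟨i0, hi0⟩ : Fin g), true) : F g) = b g (i0 + 1) := by
  rw [b_of (by omega) (by omega)]
  congr 1

/-- Generator images for the reflection substitution at level `h`. -/
def reflGen (g h i : ℕ) (bb : Bool) : F g :=
  if i ≤ h / 2 ∨ h < i then (if bb then b g i else a g i)
  else if 2 * i = h + 1 then 1
  else if bb then a g (h + 1 - i) * (b g (h + 1 - i))⁻¹ * (a g (h + 1 - i))⁻¹
  else (a g (h + 1 - i))⁻¹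

/-- The reflection endomorphism of `F g` at level `h`. -/
def reflMap (g h : ℕ) : F g →* F g :=
  FreeGroup.lift fun x => reflGen g h ((x.1 : ℕ) + 1) x.2

lemma reflMap_a {g h i : ℕ} (h1 : 1 ≤ i) (h2 : i ≤ g) :
    reflMap g h (a g i) = reflGen g h i false := by
  rw [a_of h1 h2, reflMap, FreeGroup.lift_apply_of]
  show reflGen g h ((i - 1 : ℕ) + 1) false = reflGen g h i false
  rw [show i - 1 + 1 = i by omega]

lemma reflMap_b {g h i : ℕ} (h1 : 1 ≤ i) (h2 : i ≤ g) :
    reflMap g h (b g i) = reflGen g h i true := by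
  rw [b_of h1 h2, reflMap, FreeGroup.lift_apply_of]
  show reflGen g h ((i - 1 : ℕ) + 1) true = reflGen g h i true
  rw [show i - 1 + 1 = i by omega]

lemma reflGen_a_low {g h i : ℕ} (hc : i ≤ h / 2 ∨ h < i) : reflGen g h i false = a g i := by
  rw [reflGen, if_pos hc]
  rfl

lemma reflGen_b_low {g h i : ℕ} (hc : i ≤ h / 2 ∨ h < i) : reflGen g h i true = b g i := by
  rw [reflGen, if_pos hc]
  rfl

lemma reflGen_mid {g h i : ℕ} (hc : 2 * i = h + 1) (bb : Bool) : reflGen g h i bb = 1 := by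
  rw [reflGen, if_neg (by omega), if_pos hc]

lemma reflGen_a_refl {g h i : ℕ} (hc1 : h / 2 < i) (hc2 : i ≤ h) (hc3 : 2 * i ≠ h + 1) :
    reflGen g h i false = (a g (h + 1 - i))⁻¹ := by
  rw [reflGen, if_neg (by omega), if_neg hc3]
  rfl

lemma reflGen_b_refl {g h i : ℕ} (hc1 : h / 2 < i) (hc2 : i ≤ h) (hc3 : 2 * i ≠ h + 1) :
    reflGen g h i true
      = a g (h + 1 - i) * (b g (h + 1 - i))⁻¹ * (a g (h + 1 - i))⁻¹ := by
  rw [reflGen, if_neg (by omega), if_neg hc3]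
  rfl

lemma reflMap_a_fix {g h i : ℕ} (hc : i ≤ h / 2 ∨ h < i) : reflMap g h (a g i) = a g i := by
  by_cases hr : 1 ≤ i ∧ i ≤ g
  · rw [reflMap_a hr.1 hr.2, reflGen_a_low hc]
  · rw [a_one hr, map_one]

lemma reflMap_b_fix {g h i : ℕ} (hc : i ≤ h / 2 ∨ h < i) : reflMap g h (b g i) = b g i := by
  by_cases hr : 1 ≤ i ∧ i ≤ g
  · rw [reflMap_b hr.1 hr.2, reflGen_b_low hc]
  · rw [b_one hr, map_one]

section Transport

variable {g h : ℕ} {H : Type*} [Group H] (F' : F g →* H)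

lemma refl_hA (hg : h ≤ g) : ∀ k, 1 ≤ k → 2 * k ≤ h + 1 →
    (F'.comp (reflMap g h)) (a g (h + 1 - k)) = ((F'.comp (reflMap g h)) (a g k))⁻¹ := by
  intro k h1 h2
  simp only [MonoidHom.comp_apply]
  by_cases hmid : 2 * k = h + 1
  · rw [show h + 1 - k = k by omega, reflMap_a (by omega) (by omega), reflGen_mid hmid,
      map_one, inv_one]
  · have h3 : 2 * k ≤ h := by omega
    rw [reflMap_a (show 1 ≤ h + 1 - k by omega) (by omega), reflMap_a h1 (by omega),
      reflGen_a_refl (by omega) (by omega) (by omega), reflGen_a_low (Or.inl (by omega)),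
      show h + 1 - (h + 1 - k) = k by omega, map_inv]

lemma refl_hB (hg : h ≤ g) : ∀ k, 1 ≤ k → 2 * k ≤ h →
    (F'.comp (reflMap g h)) (b g (h + 1 - k))
      = (F'.comp (reflMap g h)) (a g k) * ((F'.comp (reflMap g h)) (b g k))⁻¹
        * ((F'.comp (reflMap g h)) (a g k))⁻¹ := by
  intro k h1 h2
  simp only [MonoidHom.comp_apply]
  rw [reflMap_b (show 1 ≤ h + 1 - k by omega) (by omega),
    reflGen_b_refl (by omega) (by omega) (by omega),
    show h + 1 - (h + 1 - k) = k by omega,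
    reflMap_a h1 (by omega), reflMap_b h1 (by omega),
    reflGen_a_low (Or.inl (by omega)), reflGen_b_low (Or.inl (by omega))]
  simp only [map_mul, map_inv]

lemma refl_hma (hg : h ≤ g) (hodd : h % 2 = 1) :
    (F'.comp (reflMap g h)) (a g (h / 2 + 1)) = 1 := by
  simp only [MonoidHom.comp_apply]
  rw [reflMap_a (by omega) (by omega), reflGen_mid (by omega), map_one]

lemma refl_hmb (hg : h ≤ g) (hodd : h % 2 = 1) :
    (F'.comp (reflMap g h)) (b g (h / 2 + 1)) = 1 := by
  simp only [MonoidHom.comp_apply]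
  rw [reflMap_b (by omega) (by omega), reflGen_mid (by omega), map_one]

end Transport

section WordMaps

variable {g1 g2 : ℕ} (e : F g1 →* F g2)

lemma map_prodb {i j : ℕ} (hb : ∀ x, i ≤ x → x ≤ j → e (b g1 x) = b g2 x) :
    e (prodb g1 i j) = prodb g2 i j := by
  rw [prodb, prodb, map_list_prod, List.map_map]
  congr 1
  apply List.map_congr_left
  intro l hl
  have hl2 := List.mem_range.mp hl
  exact hb (i + l) (by omega) (by omega)

lemma map_prodab {i j : ℕ} (ha : ∀ x, i ≤ x → x ≤ j → e (a g1 x) = a g2 x)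
    (hb : ∀ x, i ≤ x → x ≤ j → e (b g1 x) = b g2 x) :
    e (prodab g1 i j) = prodab g2 i j := by
  rw [prodab, prodab, map_list_prod, List.map_map]
  congr 1
  apply List.map_congr_left
  intro l hl
  have hl2 := List.mem_range.mp hl
  simp only [Function.comp_apply, map_mul, map_inv]
  rw [ha (i + l) (by omega) (by omega), hb (i + l) (by omega) (by omega)]

lemma map_c {j : ℕ} (ha : ∀ x, 1 ≤ x → x ≤ j → e (a g1 x) = a g2 x)
    (hb : ∀ x, 1 ≤ x → x ≤ j → e (b g1 x) = b g2 x) :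
    e (c g1 j) = c g2 j := by
  rw [c_eq, c_eq, map_mul, map_inv, map_prodb e hb, map_prodab e ha hb]

end WordMaps

/-- The projection `F g →* F t` killing the generators of index `> t`. -/
def prMap (g t : ℕ) : F g →* F t :=
  FreeGroup.lift fun x =>
    if hx : (x.1 : ℕ) < t then FreeGroup.of ((⟨(x.1 : ℕ), hx⟩ : Fin t), x.2) else 1

lemma prMap_a {g t : ℕ} (ht : t ≤ g) (i : ℕ) : prMap g t (a g i) = a t i := by
  by_cases hr : 1 ≤ i ∧ i ≤ g
  · rw [a_of hr.1 hr.2, prMap, FreeGroup.lift_apply_of]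
    show (if hx : (i - 1 : ℕ) < t then
        FreeGroup.of ((⟨(i - 1 : ℕ), hx⟩ : Fin t), false) else 1) = a t i
    by_cases hi : (i - 1 : ℕ) < t
    · rw [dif_pos hi, a_of (by omega) (by omega)]
    · rw [dif_neg hi, a_one (by omega)]
  · rw [a_one hr, map_one, a_one (by omega)]

lemma prMap_b {g t : ℕ} (ht : t ≤ g) (i : ℕ) : prMap g t (b g i) = b t i := by
  by_cases hr : 1 ≤ i ∧ i ≤ g
  · rw [b_of hr.1 hr.2, prMap, FreeGroup.lift_apply_of]
    show (if hx : (i - 1 : ℕ) < t then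
        FreeGroup.of ((⟨(i - 1 : ℕ), hx⟩ : Fin t), true) else 1) = b t i
    by_cases hi : (i - 1 : ℕ) < t
    · rw [dif_pos hi, b_of (by omega) (by omega)]
    · rw [dif_neg hi, b_one (by omega)]
  · rw [b_one hr, map_one, b_one (by omega)]

/-- The inclusion `F t →* F g`. -/
def incMap (t g : ℕ) (ht : t ≤ g) : F t →* F g :=
  FreeGroup.lift fun y => FreeGroup.of ((⟨(y.1 : ℕ), lt_of_lt_of_le y.1.isLt ht⟩ : Fin g), y.2)

lemma incMap_a {t g : ℕ} (ht : t ≤ g) {i : ℕ} (h1 : 1 ≤ i) (h2 : i ≤ t) :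
    incMap t g ht (a t i) = a g i := by
  rw [a_of h1 h2, a_of h1 (by omega)]
  rfl

lemma incMap_b {t g : ℕ} (ht : t ≤ g) {i : ℕ} (h1 : 1 ≤ i) (h2 : i ≤ t) :
    incMap t g ht (b t i) = b g i := by
  rw [b_of h1 h2, b_of h1 (by omega)]
  rfl

end Maps

/-! ### The quotient side -/

section Qside

variable (g : ℕ)

/-- The full relator set. -/
abbrev Sfull : Set (F g) := Bset g 1 g ∪ Cset g

/-- The projection of `F g` onto `G₂`. -/
def qh : F g →* quotBy g (Sfull g) := (projBy g (Sfull g)).comp (toPi g)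

lemma qh_rel : ∀ w ∈ Sfull g, qh g w = 1 := by
  intro w hw
  show (projBy g (Sfull g)) (toPi g w) = 1
  rw [projBy, QuotientGroup.mk'_apply, QuotientGroup.eq_one_iff]
  exact Subgroup.subset_normalClosure (Set.mem_image_of_mem _ hw)

lemma qh_cg : qh g (c g g) = 1 := by
  show (projBy g (Sfull g)) (toPi g (c g g)) = 1
  have h1 : toPi g (c g g) = 1 := by
    have : toPi g (c g g) = QuotientGroup.mk' (Subgroup.normalClosure {c g g}) (c g g) := rfl
    rw [this, QuotientGroup.mk'_apply]; refine (QuotientGroup.eq_one_iff _).mpr ?_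
    exact Subgroup.subset_normalClosure rfl
  rw [h1, map_one]

lemma mem_Bset_B0 (s h : ℕ) : B0 g s h ∈ Bset g s h :=
  Set.mem_union_left _ (Set.mem_union_left _ (Set.mem_union_left _ rfl))

lemma mem_Bset_bodd (s h k : ℕ) (h1 : 1 ≤ k) (h2 : 2 * k - 1 ≤ h) :
    Bodd g h k ∈ Bset g s h :=
  Set.mem_union_left _ (Set.mem_union_left _ (Set.mem_union_right _ ⟨k, h1, h2, rfl⟩))

lemma mem_Bset_beven (s h k : ℕ) (h1 : 1 ≤ k) (h2 : 2 * k ≤ h) :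
    Beven g h k ∈ Bset g s h :=
  Set.mem_union_left _ (Set.mem_union_right _ ⟨k, h1, h2, rfl⟩)

lemma mem_Bset_amid (s h : ℕ) (hodd : h % 2 = 1) : a g (h / 2 + 1) ∈ Bset g s h := by
  apply Set.mem_union_right
  rw [if_pos hodd]
  exact Set.mem_insert _ _

lemma mem_Bset_camid (s h : ℕ) (hodd : h % 2 = 1) :
    c g (h / 2) * a g (h / 2 + 1) ∈ Bset g s h := by
  apply Set.mem_union_right
  rw [if_pos hodd]
  exact Set.mem_insert_of_mem _ rfl

lemma qh_B01 : qh g (prodb g 1 g) = 1 := by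
  have h1 := qh_rel g (B0 g 1 g) (Set.mem_union_left _ (mem_Bset_B0 g 1 g))
  rw [B0, if_pos rfl, B01] at h1
  exact h1

lemma qh_bodd : ∀ k, 1 ≤ k → 2 * k - 1 ≤ g → qh g (Bodd g g k) = 1 := fun k h1 h2 =>
  qh_rel g _ (Set.mem_union_left _ (mem_Bset_bodd g 1 g k h1 h2))

lemma qh_beven : ∀ k, 1 ≤ k → 2 * k ≤ g → qh g (Beven g g k) = 1 := fun k h1 h2 =>
  qh_rel g _ (Set.mem_union_left _ (mem_Bset_beven g 1 g k h1 h2))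

lemma qh_h0g : qh g (prodb g 1 g) * qh g (c g g) = 1 := by
  rw [qh_B01, qh_cg, one_mul]

lemma qh_amidg (hodd : g % 2 = 1) : qh g (a g (g / 2 + 1)) = 1 :=
  qh_rel g _ (Set.mem_union_left _ (mem_Bset_amid g 1 g hodd))

lemma qh_cmidg (hodd : g % 2 = 1) : qh g (c g (g / 2)) = 1 := by
  have h1 := qh_rel g _ (Set.mem_union_left _ (mem_Bset_camid g 1 g hodd))
  rw [map_mul, qh_amidg g hodd, mul_one] at h1
  exact h1

lemma qh_cm : qh g (c g (g / 2)) = 1 := by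
  rcases Nat.mod_two_eq_zero_or_one g with hge | hgo
  · have hhr : g = 2 * (g / 2) ∨ g = 2 * (g / 2) + 1 := by omega
    have hAg := chainA (qh g) g (qh_h0g g) (qh_bodd g) (qh_beven g)
    have hBg := chainB (qh g) g (qh_h0g g) (qh_bodd g) (qh_beven g)
    have h1 := master_prodb (qh g) g (g / 2) hhr hAg hBg
      (fun hc => absurd hc (by omega)) (fun hc => absurd hc (by omega))
    rw [qh_B01 g] at h1
    have h2 := solve_mid h1.symm
    simpa using h2
  · exact qh_cmidg g (by omega)

lemma qh_bmidg (hodd : g % 2 = 1) : qh g (b g (g / 2 + 1)) = 1 := by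
  have hhr : g = 2 * (g / 2) ∨ g = 2 * (g / 2) + 1 := by omega
  have hAg := chainA (qh g) g (qh_h0g g) (qh_bodd g) (qh_beven g)
  have hBg := chainB (qh g) g (qh_h0g g) (qh_bodd g) (qh_beven g)
  have h1 := raw_odd (qh g) g (g / 2) hhr hAg hBg (by omega)
  have hD : qh g (prodab g 1 (g / 2)) = qh g (prodb g 1 (g / 2)) * qh g (c g (g / 2)) := by
    rw [f_c_eq]; group
  rw [qh_B01 g, hD, qh_cm g, mul_one] at h1
  have h2 := solve_mid h1.symm
  simpa using h2

lemma qh_prodbm : qh g (prodb g 1 (g / 2)) = 1 := by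
  rcases Nat.mod_two_eq_zero_or_one g with hge | hgo
  · have hmem : B0 g 1 (g / 2) ∈ Cset g := by
      apply Set.mem_union_left
      rw [if_pos hge]
      exact mem_Bset_B0 g 1 (g / 2)
    have h1 := qh_rel g (B0 g 1 (g / 2)) (Set.mem_union_right _ hmem)
    rw [B0, if_pos rfl, B01] at h1
    exact h1
  · have hmem : B0 g 2 (g / 2) ∈ Cset g := by
      apply Set.mem_union_left
      rw [if_neg (by omega : ¬ g % 2 = 0)]
      exact mem_Bset_B0 g 2 (g / 2)
    have h1 := qh_rel g (B0 g 2 (g / 2)) (Set.mem_union_right _ hmem)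
    rw [B0, if_neg (by omega), B02, map_mul, map_mul, qh_cm g,
      qh_amidg g (by omega), mul_one, mul_one] at h1
    exact h1

lemma qh_boddm : ∀ k, 1 ≤ k → 2 * k - 1 ≤ g / 2 → qh g (Bodd g (g / 2) k) = 1 := by
  intro k h1 h2
  exact qh_rel g _ (Set.mem_union_right _ (Set.mem_union_left _
    (mem_Bset_bodd g _ (g / 2) k h1 h2)))

lemma qh_bevenm : ∀ k, 1 ≤ k → 2 * k ≤ g / 2 → qh g (Beven g (g / 2) k) = 1 := by
  intro k h1 h2
  exact qh_rel g _ (Set.mem_union_right _ (Set.mem_union_left _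
    (mem_Bset_beven g _ (g / 2) k h1 h2)))

lemma qh_h0m : qh g (prodb g 1 (g / 2)) * qh g (c g (g / 2)) = 1 := by
  rw [qh_prodbm, qh_cm, one_mul]

lemma qh_amidm (hodd : g / 2 % 2 = 1) : qh g (a g (g / 2 / 2 + 1)) = 1 :=
  qh_rel g _ (Set.mem_union_right _ (Set.mem_union_left _
    (mem_Bset_amid g _ (g / 2) hodd)))

lemma qh_ct : qh g (c g (g / 2 / 2)) = 1 := by
  rcases Nat.mod_two_eq_zero_or_one (g / 2) with hme | hmo
  · exact qh_rel g _ (Set.mem_union_right _ (Set.mem_union_right _ (by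
      rw [if_pos hme]
      rfl)))
  · have h1 := qh_rel g _ (Set.mem_union_right _ (Set.mem_union_left _
      (mem_Bset_camid g _ (g / 2) hmo)))
    rw [map_mul, qh_amidm g hmo, mul_one] at h1
    exact h1

lemma qh_bmidm (hodd : g / 2 % 2 = 1) : qh g (b g (g / 2 / 2 + 1)) = 1 := by
  have hhr : g / 2 = 2 * (g / 2 / 2) ∨ g / 2 = 2 * (g / 2 / 2) + 1 := by omega
  have hAm := chainA (qh g) (g / 2) (qh_h0m g) (qh_boddm g) (qh_bevenm g)
  have hBm := chainB (qh g) (g / 2) (qh_h0m g) (qh_boddm g) (qh_bevenm g)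
  have h1 := raw_odd (qh g) (g / 2) (g / 2 / 2) hhr hAm hBm (by omega)
  have hD : qh g (prodab g 1 (g / 2 / 2))
      = qh g (prodb g 1 (g / 2 / 2)) * qh g (c g (g / 2 / 2)) := by
    rw [f_c_eq]; group
  rw [qh_prodbm g, hD, qh_ct g, mul_one] at h1
  have h2 := solve_mid h1.symm
  simpa using h2

lemma qh_rg (hg : 4 ≤ g) : (qh g).comp (reflMap g g) = qh g := by
  have hAg := chainA (qh g) g (qh_h0g g) (qh_bodd g) (qh_beven g)
  have hBg := chainB (qh g) g (qh_h0g g) (qh_bodd g) (qh_beven g)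
  apply FreeGroup.ext_hom
  rintro ⟨⟨i0, hi0⟩, bb⟩
  simp only [MonoidHom.comp_apply]
  cases bb
  · rw [of_a hi0]
    by_cases hc1 : i0 + 1 ≤ g / 2
    · rw [reflMap_a_fix (Or.inl hc1)]
    · by_cases hc2 : 2 * (i0 + 1) = g + 1
      · rw [reflMap_a (by omega) (by omega), reflGen_mid hc2, map_one,
          show i0 + 1 = g / 2 + 1 by omega, qh_amidg g (by omega)]
      · rw [reflMap_a (by omega) (by omega), reflGen_a_refl (by omega) (by omega) hc2,
          map_inv]
        have h3 := hAg (g + 1 - (i0 + 1)) (by omega) (by omega)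
        rw [show g + 1 - (g + 1 - (i0 + 1)) = i0 + 1 by omega] at h3
        exact h3.symm
  · rw [of_b hi0]
    by_cases hc1 : i0 + 1 ≤ g / 2
    · rw [reflMap_b_fix (Or.inl hc1)]
    · by_cases hc2 : 2 * (i0 + 1) = g + 1
      · rw [reflMap_b (by omega) (by omega), reflGen_mid hc2, map_one,
          show i0 + 1 = g / 2 + 1 by omega, qh_bmidg g (by omega)]
      · rw [reflMap_b (by omega) (by omega), reflGen_b_refl (by omega) (by omega) hc2]
        simp only [map_mul, map_inv]
        have h3 := hBg (g + 1 - (i0 + 1)) (by omega) (by omega)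
        rw [show g + 1 - (g + 1 - (i0 + 1)) = i0 + 1 by omega] at h3
        exact h3.symm

lemma qh_rm (hg : 4 ≤ g) : (qh g).comp (reflMap g (g / 2)) = qh g := by
  have hAm := chainA (qh g) (g / 2) (qh_h0m g) (qh_boddm g) (qh_bevenm g)
  have hBm := chainB (qh g) (g / 2) (qh_h0m g) (qh_boddm g) (qh_bevenm g)
  apply FreeGroup.ext_hom
  rintro ⟨⟨i0, hi0⟩, bb⟩
  simp only [MonoidHom.comp_apply]
  cases bb
  · rw [of_a hi0]
    by_cases hc0 : g / 2 < i0 + 1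
    · rw [reflMap_a_fix (Or.inr hc0)]
    · by_cases hc1 : i0 + 1 ≤ g / 2 / 2
      · rw [reflMap_a_fix (Or.inl hc1)]
      · by_cases hc2 : 2 * (i0 + 1) = g / 2 + 1
        · rw [reflMap_a (by omega) (by omega), reflGen_mid hc2, map_one,
            show i0 + 1 = g / 2 / 2 + 1 by omega, qh_amidm g (by omega)]
        · rw [reflMap_a (by omega) (by omega), reflGen_a_refl (by omega) (by omega) hc2,
            map_inv]
          have h3 := hAm (g / 2 + 1 - (i0 + 1)) (by omega) (by omega)
          rw [show g / 2 + 1 - (g / 2 + 1 - (i0 + 1)) = i0 + 1 by omega] at h3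
          exact h3.symm
  · rw [of_b hi0]
    by_cases hc0 : g / 2 < i0 + 1
    · rw [reflMap_b_fix (Or.inr hc0)]
    · by_cases hc1 : i0 + 1 ≤ g / 2 / 2
      · rw [reflMap_b_fix (Or.inl hc1)]
      · by_cases hc2 : 2 * (i0 + 1) = g / 2 + 1
        · rw [reflMap_b (by omega) (by omega), reflGen_mid hc2, map_one,
            show i0 + 1 = g / 2 / 2 + 1 by omega, qh_bmidm g (by omega)]
        · rw [reflMap_b (by omega) (by omega), reflGen_b_refl (by omega) (by omega) hc2]
          simp only [map_mul, map_inv]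
          have h3 := hBm (g / 2 + 1 - (i0 + 1)) (by omega) (by omega)
          rw [show g / 2 + 1 - (g / 2 + 1 - (i0 + 1)) = i0 + 1 by omega] at h3
          exact h3.symm

/-- The composite `F g → F t → F g → G₂` which kills all generators of index `> t`. -/
def q2h : F g →* quotBy g (Sfull g) :=
  ((qh g).comp (incMap (g / 2 / 2) g
    (le_trans (Nat.div_le_self _ _) (Nat.div_le_self _ _)))).comp (prMap g (g / 2 / 2))

lemma q2_low_a {j : ℕ} (hj : j ≤ g / 2 / 2) : q2h g (a g j) = qh g (a g j) := by
  by_cases h1 : 1 ≤ j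
  · show (qh g) ((incMap (g / 2 / 2) g _) (prMap g (g / 2 / 2) (a g j))) = qh g (a g j)
    rw [prMap_a (le_trans (Nat.div_le_self _ _) (Nat.div_le_self _ _)) j,
      incMap_a _ h1 hj]
  · rw [a_one (by omega), map_one, map_one]

lemma q2_low_b {j : ℕ} (hj : j ≤ g / 2 / 2) : q2h g (b g j) = qh g (b g j) := by
  by_cases h1 : 1 ≤ j
  · show (qh g) ((incMap (g / 2 / 2) g _) (prMap g (g / 2 / 2) (b g j))) = qh g (b g j)
    rw [prMap_b (le_trans (Nat.div_le_self _ _) (Nat.div_le_self _ _)) j,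
      incMap_b _ h1 hj]
  · rw [b_one (by omega), map_one, map_one]

lemma qh_stepC (hg : 4 ≤ g) :
    (q2h g).comp ((reflMap g (g / 2)).comp (reflMap g g))
      = (qh g).comp ((reflMap g (g / 2)).comp (reflMap g g)) := by
  have agA : ∀ i, 1 ≤ i → i ≤ g / 2 →
      q2h g (reflMap g (g / 2) (a g i)) = qh g (reflMap g (g / 2) (a g i)) := by
    intro i h1 h2
    by_cases hc1 : i ≤ g / 2 / 2
    · rw [reflMap_a_fix (Or.inl hc1)]
      exact q2_low_a g hc1
    · by_cases hc2 : 2 * i = g / 2 + 1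
      · rw [reflMap_a h1 (by omega), reflGen_mid hc2, map_one, map_one]
      · rw [reflMap_a h1 (by omega), reflGen_a_refl (by omega) h2 hc2, map_inv, map_inv,
          q2_low_a g (show g / 2 + 1 - i ≤ g / 2 / 2 by omega)]
  have agB : ∀ i, 1 ≤ i → i ≤ g / 2 →
      q2h g (reflMap g (g / 2) (b g i)) = qh g (reflMap g (g / 2) (b g i)) := by
    intro i h1 h2
    by_cases hc1 : i ≤ g / 2 / 2
    · rw [reflMap_b_fix (Or.inl hc1)]
      exact q2_low_b g hc1
    · by_cases hc2 : 2 * i = g / 2 + 1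
      · rw [reflMap_b h1 (by omega), reflGen_mid hc2, map_one, map_one]
      · rw [reflMap_b h1 (by omega), reflGen_b_refl (by omega) h2 hc2]
        simp only [map_mul, map_inv]
        rw [q2_low_a g (show g / 2 + 1 - i ≤ g / 2 / 2 by omega),
          q2_low_b g (show g / 2 + 1 - i ≤ g / 2 / 2 by omega)]
  apply FreeGroup.ext_hom
  rintro ⟨⟨i0, hi0⟩, bb⟩
  simp only [MonoidHom.comp_apply]
  cases bb
  · rw [of_a hi0]
    by_cases hc1 : i0 + 1 ≤ g / 2
    · rw [reflMap_a_fix (Or.inl hc1)]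
      exact agA _ (by omega) hc1
    · by_cases hc2 : 2 * (i0 + 1) = g + 1
      · rw [reflMap_a (by omega) (by omega), reflGen_mid hc2, map_one, map_one, map_one]
      · rw [reflMap_a (by omega) (by omega), reflGen_a_refl (by omega) (by omega) hc2,
          map_inv, map_inv, map_inv, agA (g + 1 - (i0 + 1)) (by omega) (by omega)]
  · rw [of_b hi0]
    by_cases hc1 : i0 + 1 ≤ g / 2
    · rw [reflMap_b_fix (Or.inl hc1)]
      exact agB _ (by omega) hc1
    · by_cases hc2 : 2 * (i0 + 1) = g + 1
      · rw [reflMap_b (by omega) (by omega), reflGen_mid hc2, map_one, map_one, map_one]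
      · rw [reflMap_b (by omega) (by omega), reflGen_b_refl (by omega) (by omega) hc2]
        simp only [map_mul, map_inv]
        rw [agA (g + 1 - (i0 + 1)) (by omega) (by omega),
          agB (g + 1 - (i0 + 1)) (by omega) (by omega)]

end Qside

/-! ### The map to the genus-`t` surface group -/

section Phiside

variable (g : ℕ)

/-- The projection onto the free group on the first `t` generator pairs, into `π_t`. -/
abbrev tPi : F g →* pi (g / 2 / 2) := (toPi (g / 2 / 2)).comp (prMap g (g / 2 / 2))

/-- The level-`m` folded map. -/
abbrev F2h : F g →* pi (g / 2 / 2) := (tPi g).comp (reflMap g (g / 2))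

/-- The full folding map `F g →* π_t`. -/
abbrev phiF : F g →* pi (g / 2 / 2) := (F2h g).comp (reflMap g g)

lemma toPi_c (t : ℕ) : toPi t (c t t) = 1 := by
  have h0 : toPi t (c t t) = QuotientGroup.mk' (Subgroup.normalClosure {c t t}) (c t t) := rfl
  rw [h0, QuotientGroup.mk'_apply]; refine (QuotientGroup.eq_one_iff _).mpr ?_
  exact Subgroup.subset_normalClosure rfl

lemma tPi_ct : tPi g (c g (g / 2 / 2)) = 1 := by
  show (toPi (g / 2 / 2)) (prMap g (g / 2 / 2) (c g (g / 2 / 2))) = 1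
  rw [map_c (prMap g (g / 2 / 2))
      (fun x _ _ => prMap_a (le_trans (Nat.div_le_self _ _) (Nat.div_le_self _ _)) x)
      (fun x _ _ => prMap_b (le_trans (Nat.div_le_self _ _) (Nat.div_le_self _ _)) x),
    toPi_c]

lemma F2_ct : F2h g (c g (g / 2 / 2)) = 1 := by
  show (tPi g) (reflMap g (g / 2) (c g (g / 2 / 2))) = 1
  rw [map_c (reflMap g (g / 2))
      (fun x _ hx2 => reflMap_a_fix (Or.inl hx2))
      (fun x _ hx2 => reflMap_b_fix (Or.inl hx2)),
    tPi_ct]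

lemma hhrm (hg : 4 ≤ g) : g / 2 = 2 * (g / 2 / 2) ∨ g / 2 = 2 * (g / 2 / 2) + 1 := by omega

lemma hhrg (hg : 4 ≤ g) : g = 2 * (g / 2) ∨ g = 2 * (g / 2) + 1 := by omega

lemma F2_cm (hg : 4 ≤ g) : F2h g (c g (g / 2)) = 1 := by
  rw [master_c (F2h g) (g / 2) (g / 2 / 2) (hhrm g hg)
      (refl_hA (tPi g) (Nat.div_le_self _ _)) (refl_hB (tPi g) (Nat.div_le_self _ _))
      (fun ho => refl_hma (tPi g) (Nat.div_le_self _ _) (by omega))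
      (fun ho => refl_hmb (tPi g) (Nat.div_le_self _ _) (by omega)),
    F2_ct g]
  group

lemma F2_prodbm (hg : 4 ≤ g) : F2h g (prodb g 1 (g / 2)) = 1 := by
  rw [master_prodb (F2h g) (g / 2) (g / 2 / 2) (hhrm g hg)
      (refl_hA (tPi g) (Nat.div_le_self _ _)) (refl_hB (tPi g) (Nat.div_le_self _ _))
      (fun ho => refl_hma (tPi g) (Nat.div_le_self _ _) (by omega))
      (fun ho => refl_hmb (tPi g) (Nat.div_le_self _ _) (by omega)),
    F2_ct g]
  group

lemma phi_ct (hg : 4 ≤ g) : phiF g (c g (g / 2 / 2)) = 1 := by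
  show (F2h g) (reflMap g g (c g (g / 2 / 2))) = 1
  rw [map_c (reflMap g g)
      (fun x _ hx2 => reflMap_a_fix (Or.inl (by omega)))
      (fun x _ hx2 => reflMap_b_fix (Or.inl (by omega))),
    F2_ct g]

lemma phi_cm (hg : 4 ≤ g) : phiF g (c g (g / 2)) = 1 := by
  show (F2h g) (reflMap g g (c g (g / 2))) = 1
  rw [map_c (reflMap g g)
      (fun x _ hx2 => reflMap_a_fix (Or.inl hx2))
      (fun x _ hx2 => reflMap_b_fix (Or.inl hx2)),
    F2_cm g hg]

lemma phi_prodbm (hg : 4 ≤ g) : phiF g (prodb g 1 (g / 2)) = 1 := by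
  show (F2h g) (reflMap g g (prodb g 1 (g / 2))) = 1
  rw [map_prodb (reflMap g g) (fun x _ hx2 => reflMap_b_fix (Or.inl hx2)),
    F2_prodbm g hg]

lemma phi_cg (hg : 4 ≤ g) : phiF g (c g g) = 1 := by
  rw [master_c (phiF g) g (g / 2) (hhrg g hg)
      (refl_hA (F2h g) (le_refl g)) (refl_hB (F2h g) (le_refl g))
      (fun ho => refl_hma (F2h g) (le_refl g) (by omega))
      (fun ho => refl_hmb (F2h g) (le_refl g) (by omega)),
    phi_cm g hg]
  group

lemma phi_prodbg (hg : 4 ≤ g) : phiF g (prodb g 1 g) = 1 := by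
  rw [master_prodb (phiF g) g (g / 2) (hhrg g hg)
      (refl_hA (F2h g) (le_refl g)) (refl_hB (F2h g) (le_refl g))
      (fun ho => refl_hma (F2h g) (le_refl g) (by omega))
      (fun ho => refl_hmb (F2h g) (le_refl g) (by omega)),
    phi_cm g hg]
  group

lemma phi_boddg (hg : 4 ≤ g) : ∀ k, 1 ≤ k → 2 * k - 1 ≤ g → phiF g (Bodd g g k) = 1 := by
  intro k h1 h2
  rw [master_bodd (phiF g) g (g / 2) (hhrg g hg)
      (refl_hA (F2h g) (le_refl g)) (refl_hB (F2h g) (le_refl g))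
      (fun ho => refl_hma (F2h g) (le_refl g) (by omega))
      (fun ho => refl_hmb (F2h g) (le_refl g) (by omega)) k h1 (by omega),
    phi_cm g hg]
  group

lemma phi_beveng (hg : 4 ≤ g) : ∀ k, 1 ≤ k → 2 * k ≤ g → phiF g (Beven g g k) = 1 := by
  intro k h1 h2
  rw [master_beven (phiF g) g (g / 2) (hhrg g hg)
      (refl_hA (F2h g) (le_refl g)) (refl_hB (F2h g) (le_refl g))
      (fun ho => refl_hma (F2h g) (le_refl g) (by omega))
      (fun ho => refl_hmb (F2h g) (le_refl g) (by omega)) k h1 h2,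
    phi_cm g hg]
  group

lemma phi_amidg (hodd : g % 2 = 1) : phiF g (a g (g / 2 + 1)) = 1 :=
  refl_hma (F2h g) (le_refl g) hodd

lemma phi_boddm (hg : 4 ≤ g) : ∀ k, 1 ≤ k → 2 * k - 1 ≤ g / 2 →
    phiF g (Bodd g (g / 2) k) = 1 := by
  intro k h1 h2
  have hfix : reflMap g g (Bodd g (g / 2) k) = Bodd g (g / 2) k := by
    rw [Bodd, map_mul, map_mul, map_mul,
      reflMap_a_fix (Or.inl (by omega)), reflMap_a_fix (Or.inl (by omega)),
      map_prodb (reflMap g g) (fun x _ hx2 => reflMap_b_fix (Or.inl (by omega))),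
      map_c (reflMap g g) (fun x _ hx2 => reflMap_a_fix (Or.inl (by omega)))
        (fun x _ hx2 => reflMap_b_fix (Or.inl (by omega)))]
  show (F2h g) (reflMap g g (Bodd g (g / 2) k)) = 1
  rw [hfix,
    master_bodd (F2h g) (g / 2) (g / 2 / 2) (hhrm g hg)
      (refl_hA (tPi g) (Nat.div_le_self _ _)) (refl_hB (tPi g) (Nat.div_le_self _ _))
      (fun ho => refl_hma (tPi g) (Nat.div_le_self _ _) (by omega))
      (fun ho => refl_hmb (tPi g) (Nat.div_le_self _ _) (by omega)) k h1 (by omega),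
    F2_ct g]
  group

lemma phi_bevenm (hg : 4 ≤ g) : ∀ k, 1 ≤ k → 2 * k ≤ g / 2 →
    phiF g (Beven g (g / 2) k) = 1 := by
  intro k h1 h2
  have hfix : reflMap g g (Beven g (g / 2) k) = Beven g (g / 2) k := by
    rw [Beven, map_mul, map_mul, map_mul,
      reflMap_a_fix (Or.inl (by omega)), reflMap_a_fix (Or.inl (by omega)),
      map_prodb (reflMap g g) (fun x _ hx2 => reflMap_b_fix (Or.inl (by omega))),
      map_c (reflMap g g) (fun x _ hx2 => reflMap_a_fix (Or.inl (by omega)))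
        (fun x _ hx2 => reflMap_b_fix (Or.inl (by omega)))]
  show (F2h g) (reflMap g g (Beven g (g / 2) k)) = 1
  rw [hfix,
    master_beven (F2h g) (g / 2) (g / 2 / 2) (hhrm g hg)
      (refl_hA (tPi g) (Nat.div_le_self _ _)) (refl_hB (tPi g) (Nat.div_le_self _ _))
      (fun ho => refl_hma (tPi g) (Nat.div_le_self _ _) (by omega))
      (fun ho => refl_hmb (tPi g) (Nat.div_le_self _ _) (by omega)) k h1 h2,
    F2_ct g]
  group

lemma phi_amidm (hg : 4 ≤ g) (hodd : g / 2 % 2 = 1) :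
    phiF g (a g (g / 2 / 2 + 1)) = 1 := by
  show (F2h g) (reflMap g g (a g (g / 2 / 2 + 1))) = 1
  rw [reflMap_a_fix (Or.inl (by omega))]
  exact refl_hma (tPi g) (Nat.div_le_self _ _) hodd

lemma phi_rel (hg : 4 ≤ g) : ∀ w ∈ Sfull g, phiF g w = 1 := by
  intro w hw
  rcases hw with hw | hw
  · -- w ∈ Bset g 1 g
    rcases hw with ((hw | hw) | hw) | hw
    · rw [Set.mem_singleton_iff] at hw
      subst hw
      rw [B0, if_pos rfl, B01]
      exact phi_prodbg g hg
    · obtain ⟨k, h1, h2, rfl⟩ := hw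
      exact phi_boddg g hg k h1 h2
    · obtain ⟨k, h1, h2, rfl⟩ := hw
      exact phi_beveng g hg k h1 h2
    · by_cases hp : g % 2 = 1
      · rw [if_pos hp] at hw
        rcases hw with hw | hw
        · subst hw
          exact phi_amidg g hp
        · rw [Set.mem_singleton_iff] at hw
          subst hw
          rw [map_mul, phi_cm g hg, phi_amidg g hp, one_mul]
      · rw [if_neg hp] at hw
        exact absurd hw (Set.notMem_empty _)
  · -- w ∈ Cset g
    rcases hw with hw | hw
    · -- w ∈ Bset g s (g/2)
      rcases hw with ((hw | hw) | hw) | hw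
      · rw [Set.mem_singleton_iff] at hw
        subst hw
        rcases Nat.mod_two_eq_zero_or_one g with hge | hgo
        · rw [if_pos hge, B0, if_pos rfl, B01]
          exact phi_prodbm g hg
        · rw [if_neg (by omega), B0, if_neg (by omega), B02, map_mul, map_mul,
            phi_prodbm g hg, phi_cm g hg, one_mul, one_mul]
          have : g / 2 + 1 = g / 2 + 1 := rfl
          show (F2h g) (reflMap g g (a g (g / 2 + 1))) = 1
          rw [reflMap_a (by omega) (by omega), reflGen_mid (by omega), map_one]
      · obtain ⟨k, h1, h2, rfl⟩ := hw
        exact phi_boddm g hg k h1 h2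
      · obtain ⟨k, h1, h2, rfl⟩ := hw
        exact phi_bevenm g hg k h1 h2
      · by_cases hp : g / 2 % 2 = 1
        · rw [if_pos hp] at hw
          rcases hw with hw | hw
          · subst hw
            exact phi_amidm g hg hp
          · rw [Set.mem_singleton_iff] at hw
            subst hw
            rw [map_mul, phi_ct g hg, phi_amidm g hg hp, one_mul]
        · rw [if_neg hp] at hw
          exact absurd hw (Set.notMem_empty _)
    · by_cases hp : g / 2 % 2 = 0
      · rw [if_pos hp] at hw
        rw [Set.mem_singleton_iff] at hw
        subst hw
        exact phi_ct g hg
      · rw [if_neg hp] at hw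
        exact absurd hw (Set.notMem_empty _)

end Phiside

/-- For `g ≥ 4`, with `m = ⌊g/2⌋` and `t = ⌊m/2⌋`, the group
`G_2 = π_g / N(ℬ^g_1 ∪ 𝒞)` is isomorphic to the genus-`t` surface group `π_t`. -/
theorem G2_iso_genus_t (g : ℕ) (hg : 4 ≤ g) :
    Nonempty (quotBy g (Bset g 1 g ∪ Cset g) ≃* pi (g / 2 / 2)) := by
  have htle : g / 2 / 2 ≤ g := le_trans (Nat.div_le_self _ _) (Nat.div_le_self _ _)
  -- The descended map `φbar : G₂ →* π_t`.
  have hrel1 : ∀ r ∈ ({c g g} : Set (F g)),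
      FreeGroup.lift (fun x => phiF g (FreeGroup.of x)) r = 1 := by
    intro r hr
    rw [Set.mem_singleton_iff] at hr
    subst hr
    have hlift : FreeGroup.lift (fun x => phiF g (FreeGroup.of x)) = phiF g :=
      FreeGroup.ext_hom _ _ (fun x => by rw [FreeGroup.lift_apply_of])
    rw [hlift]
    exact phi_cg g hg
  let φ1 : pi g →* pi (g / 2 / 2) := PresentedGroup.toGroup hrel1
  have hφ1 : ∀ w : F g, φ1 (toPi g w) = phiF g w := by
    have hc : φ1.comp (toPi g) = phiF g := by
      apply FreeGroup.ext_hom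
      intro x
      simp only [MonoidHom.comp_apply]
      exact PresentedGroup.toGroup.of hrel1
    intro w
    exact DFunLike.congr_fun hc w
  have hker : Subgroup.normalClosure (toPi g '' (Sfull g)) ≤ φ1.ker := by
    apply Subgroup.normalClosure_le_normal
    rintro _ ⟨w, hw, rfl⟩
    rw [SetLike.mem_coe, MonoidHom.mem_ker, hφ1]
    exact phi_rel g hg w hw
  let φbar : quotBy g (Sfull g) →* pi (g / 2 / 2) := QuotientGroup.lift _ φ1 hker
  -- The map `ψbar : π_t →* G₂`.
  let Ψ : F (g / 2 / 2) →* quotBy g (Sfull g) := (qh g).comp (incMap (g / 2 / 2) g htle)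
  have hrel2 : ∀ r ∈ ({c (g / 2 / 2) (g / 2 / 2)} : Set (F (g / 2 / 2))),
      FreeGroup.lift (fun y => Ψ (FreeGroup.of y)) r = 1 := by
    intro r hr
    rw [Set.mem_singleton_iff] at hr
    subst hr
    have hlift : FreeGroup.lift (fun y => Ψ (FreeGroup.of y)) = Ψ :=
      FreeGroup.ext_hom _ _ (fun y => by rw [FreeGroup.lift_apply_of])
    rw [hlift]
    show (qh g) (incMap (g / 2 / 2) g htle (c (g / 2 / 2) (g / 2 / 2))) = 1
    rw [map_c (incMap (g / 2 / 2) g htle) (fun x hx1 hx2 => incMap_a htle hx1 hx2)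
        (fun x hx1 hx2 => incMap_b htle hx1 hx2)]
    exact qh_ct g
  let ψbar : pi (g / 2 / 2) →* quotBy g (Sfull g) := PresentedGroup.toGroup hrel2
  have hψof : ∀ y, ψbar (toPi (g / 2 / 2) (FreeGroup.of y)) = Ψ (FreeGroup.of y) :=
    fun y => PresentedGroup.toGroup.of hrel2
  have hφof : ∀ w : F g, φbar (qh g w) = phiF g w := by
    intro w
    show φbar (QuotientGroup.mk (toPi g w)) = phiF g w
    rw [QuotientGroup.lift_mk']
    exact hφ1 w
  -- `ψbar ∘ φbar = id`
  have hψφ : ψbar.comp φbar = MonoidHom.id _ := by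
    apply QuotientGroup.monoidHom_ext
    apply QuotientGroup.monoidHom_ext
    apply FreeGroup.ext_hom
    intro x
    show ψbar (φbar (qh g (FreeGroup.of x))) = qh g (FreeGroup.of x)
    rw [hφof]
    have e2 : ψbar (phiF g (FreeGroup.of x))
        = q2h g ((reflMap g (g / 2)) ((reflMap g g) (FreeGroup.of x))) := by
      show ψbar (toPi (g / 2 / 2) (prMap g (g / 2 / 2)
        ((reflMap g (g / 2)) ((reflMap g g) (FreeGroup.of x))))) = _
      have e3 : ψbar.comp (toPi (g / 2 / 2)) = Ψ := by
        apply FreeGroup.ext_hom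
        intro y
        simp only [MonoidHom.comp_apply]
        exact hψof y
      exact DFunLike.congr_fun e3
        ((prMap g (g / 2 / 2)) ((reflMap g (g / 2)) ((reflMap g g) (FreeGroup.of x))))
    rw [e2]
    have e5 := DFunLike.congr_fun (qh_stepC g hg) (FreeGroup.of x)
    have e6 := DFunLike.congr_fun (qh_rm g hg) ((reflMap g g) (FreeGroup.of x))
    have e7 := DFunLike.congr_fun (qh_rg g hg) (FreeGroup.of x)
    exact e5.trans (e6.trans e7)
  -- `φbar ∘ ψbar = id`
  have hφψ : φbar.comp ψbar = MonoidHom.id _ := by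
    apply QuotientGroup.monoidHom_ext
    apply FreeGroup.ext_hom
    intro y
    show φbar (ψbar (toPi (g / 2 / 2) (FreeGroup.of y))) = toPi (g / 2 / 2) (FreeGroup.of y)
    rw [hψof]
    rcases y with ⟨⟨j0, hj0⟩, bb⟩
    have hj0g : j0 < g := by omega
    cases bb
    · have e4 : Ψ (FreeGroup.of ((⟨j0, hj0⟩ : Fin (g / 2 / 2)), false))
          = qh g (a g (j0 + 1)) := by
        show (qh g) (incMap (g / 2 / 2) g htle (FreeGroup.of (⟨j0, hj0⟩, false)))
          = qh g (a g (j0 + 1))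
        rw [show incMap (g / 2 / 2) g htle (FreeGroup.of (⟨j0, hj0⟩, false))
            = FreeGroup.of ((⟨j0, hj0g⟩ : Fin g), false) from rfl, of_a hj0g]
      rw [e4, hφof]
      show (F2h g) ((reflMap g g) (a g (j0 + 1))) = _
      rw [reflMap_a_fix (Or.inl (by omega))]
      show (tPi g) ((reflMap g (g / 2)) (a g (j0 + 1))) = _
      rw [reflMap_a_fix (Or.inl (by omega))]
      show (toPi (g / 2 / 2)) (prMap g (g / 2 / 2) (a g (j0 + 1))) = _
      rw [prMap_a htle, of_a hj0]
    · have e4 : Ψ (FreeGroup.of ((⟨j0, hj0⟩ : Fin (g / 2 / 2)), true))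
          = qh g (b g (j0 + 1)) := by
        show (qh g) (incMap (g / 2 / 2) g htle (FreeGroup.of (⟨j0, hj0⟩, true)))
          = qh g (b g (j0 + 1))
        rw [show incMap (g / 2 / 2) g htle (FreeGroup.of (⟨j0, hj0⟩, true))
            = FreeGroup.of ((⟨j0, hj0g⟩ : Fin g), true) from rfl, of_b hj0g]
      rw [e4, hφof]
      show (F2h g) ((reflMap g g) (b g (j0 + 1))) = _
      rw [reflMap_b_fix (Or.inl (by omega))]
      show (tPi g) ((reflMap g (g / 2)) (b g (j0 + 1))) = _
      rw [reflMap_b_fix (Or.inl (by omega))]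
      show (toPi (g / 2 / 2)) (prMap g (g / 2 / 2) (b g (j0 + 1))) = _
      rw [prMap_b htle, of_b hj0]
  exact ⟨MonoidHom.toMulEquiv φbar ψbar hψφ hφψ⟩
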